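/- Let Z be a real-valued random variable with law the Gaussian measure N(m, v) on ℝ, where v > 0, and let 𝒵 ⊆ ℝ be a measurable set with P(Z ∈ 𝒵) > 0. Define the selective p-value p(t) := P(Z ≥ t and Z ∈ 𝒵) / P(Z ∈ 𝒵). Then for every α ∈ (0, 1), P(p(Z) ≤ α and Z ∈ 𝒵) = α · P(Z ∈ 𝒵), i.e., P(p(Z) ≤ α | Z ∈ 𝒵) = α. -/

import Mathlib

/-! If `ν` is the law of `Z` restricted to `𝒵`, it has no atoms, so its survival function
`G t = ν [t, ∞)` is continuous and decreases from `ν ℝ` to `0`. Hence for `0 < a < ν ℝ` the set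
`{G ≤ a}` is a closed up-set `[t₀, ∞)` with `G t₀ = a`, so `ν {G ≤ a} = a`. As `p (Z) ≤ α` exactly
when `G (Z) ≤ α · ν ℝ`, this gives the claim. -/

open MeasureTheory ProbabilityTheory Set Filter Topology
open scoped NNReal ENNReal

section MeasureRealIci

variable {ν : Measure ℝ} [IsFiniteMeasure ν]

lemma antitone_measureReal_Ici : Antitone fun t => ν.real (Ici t) :=
  fun _ _ h => measureReal_mono (Ici_subset_Ici.2 h)

lemma tendsto_measureReal_Ici_atTop : Tendsto (fun t => ν.real (Ici t)) atTop (𝓝 0) := by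
  have h := tendsto_measure_iInter_atTop (μ := ν) (fun t : ℝ => measurableSet_Ici.nullMeasurableSet)
    (fun _ _ h => Ici_subset_Ici.2 h) ⟨0, measure_ne_top ν _⟩
  have hempty : ⋂ t : ℝ, Ici t = ∅ :=
    eq_empty_of_forall_notMem fun x hx =>
      (mem_iInter.1 hx (x + 1) : x + 1 ≤ x).not_gt (lt_add_one x)
  rw [hempty, measure_empty] at h
  exact (ENNReal.tendsto_toReal ENNReal.zero_ne_top).comp h

lemma tendsto_measureReal_Ici_atBot :
    Tendsto (fun t => ν.real (Ici t)) atBot (𝓝 (ν.real univ)) :=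
  (ENNReal.tendsto_toReal (measure_ne_top ν _)).comp (tendsto_measure_Ici_atBot ν)

lemma measureReal_Ici_sub_measureReal_Ici {a b : ℝ} (h : a ≤ b) :
    ν.real (Ici a) - ν.real (Ici b) = ν.real (Ico a b) := by
  rw [← measureReal_sdiff (Ici_subset_Ici.2 h) measurableSet_Ici, Ici_sdiff_Ici]

lemma abs_measureReal_Ici_sub_le (s t : ℝ) :
    |ν.real (Ici s) - ν.real (Ici t)| ≤ ν.real (Icc (t - |s - t|) (t + |s - t|)) := by
  rcases le_total s t with h | h
  · rw [measureReal_Ici_sub_measureReal_Ici h, abs_of_nonneg measureReal_nonneg,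
      abs_of_nonpos (sub_nonpos.2 h)]
    exact measureReal_mono (Ico_subset_Icc_self.trans (Icc_subset_Icc (by linarith) (by linarith)))
  · rw [abs_sub_comm, measureReal_Ici_sub_measureReal_Ici h, abs_of_nonneg measureReal_nonneg,
      abs_of_nonneg (sub_nonneg.2 h)]
    exact measureReal_mono (Ico_subset_Icc_self.trans (Icc_subset_Icc (by linarith) (by linarith)))

lemma continuous_measureReal_Ici [NullSingletonClass ν] : Continuous fun t => ν.real (Ici t) := by
  refine continuous_iff_continuousAt.2 fun t => ?_
  have hδ : Tendsto (fun s => |s - t|) (𝓝 t) (𝓝 0) := by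
    simpa using ((continuous_sub_right t).abs.tendsto t)
  have hIcc : Tendsto (fun s => ν.real (Icc (t - |s - t|) (t + |s - t|))) (𝓝 t) (𝓝 0) :=
    (ENNReal.tendsto_toReal ENNReal.zero_ne_top).comp ((tendsto_measure_Icc ν t).comp hδ)
  exact tendsto_iff_norm_sub_tendsto_zero.2
    (squeeze_zero (fun _ => norm_nonneg _) (fun s => abs_measureReal_Ici_sub_le s t) hIcc)

lemma measureReal_setOf_measureReal_Ici_le [NullSingletonClass ν] {a : ℝ} (ha : 0 < a)
    (ha' : a < ν.real univ) : ν.real {t | ν.real (Ici t) ≤ a} = a := by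
  set G : ℝ → ℝ := fun t => ν.real (Ici t)
  obtain ⟨t₁, ht₁⟩ : ∃ t, G t ≤ a :=
    (tendsto_measureReal_Ici_atTop.eventually (ge_mem_nhds ha)).exists
  obtain ⟨t₂, ht₂⟩ : ∃ t, a < G t :=
    (tendsto_measureReal_Ici_atBot.eventually (lt_mem_nhds ha')).exists
  obtain ⟨t₀, ht₀⟩ : a ∈ range G :=
    mem_range_of_exists_le_of_exists_ge continuous_measureReal_Ici ⟨t₁, ht₁⟩ ⟨t₂, ht₂.le⟩
  set S := {t | G t ≤ a}
  have hbdd : BddBelow S := ⟨t₂, fun t ht => le_of_not_gt fun h =>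
    (ht₂.trans_le (antitone_measureReal_Ici h.le)).not_ge ht⟩
  have hmin : sInf S ∈ S :=
    (isClosed_le continuous_measureReal_Ici continuous_const).csInf_mem ⟨t₀, ht₀.le⟩ hbdd
  apply le_antisymm
  · calc ν.real S ≤ G (sInf S) := measureReal_mono fun t ht => csInf_le hbdd ht
      _ ≤ a := hmin
  · calc a = G t₀ := ht₀.symm
      _ ≤ ν.real S := measureReal_mono fun t ht => (antitone_measureReal_Ici ht).trans ht₀.le

end MeasureRealIci

theorem stmt_1_general {Ω : Type*} [MeasurableSpace Ω] (P : Measure Ω)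
    (Z : Ω → ℝ) (hZ : Measurable Z) (m : ℝ) (v : ℝ≥0) (hv : 0 < v)
    (hlaw : P.map Z = gaussianReal m v)
    (𝒵 : Set ℝ) (h𝒵 : MeasurableSet 𝒵) (hpos : 0 < P {ω | Z ω ∈ 𝒵})
    (p : ℝ → ℝ)
    (hp : ∀ t : ℝ, p t = (P {ω | t ≤ Z ω ∧ Z ω ∈ 𝒵}).toReal / (P {ω | Z ω ∈ 𝒵}).toReal)
    (α : ℝ) (hα : α ∈ Set.Ioo (0 : ℝ) 1) :
    P {ω | p (Z ω) ≤ α ∧ Z ω ∈ 𝒵} = ENNReal.ofReal α * P {ω | Z ω ∈ 𝒵} := by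
  obtain ⟨hα0, hα1⟩ := hα
  have := nullSingletonClass_gaussianReal (μ := m) hv.ne'
  set ν := (gaussianReal m v).restrict 𝒵
  have hν : ∀ s, MeasurableSet s → P {ω | Z ω ∈ s ∧ Z ω ∈ 𝒵} = ν s := fun s hs => by
    rw [Measure.restrict_apply hs, ← hlaw, Measure.map_apply hZ (hs.inter h𝒵)]
    rfl
  have hνuniv : P {ω | Z ω ∈ 𝒵} = ν univ := by simpa using hν univ .univ
  have hc : 0 < ν.real univ := ENNReal.toReal_pos (hνuniv ▸ hpos.ne') (measure_ne_top _ _)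
  have hpν : ∀ t, p t ≤ α ↔ ν.real (Ici t) ≤ α * ν.real univ := fun t => by
    rw [hp, show P {ω | t ≤ Z ω ∧ Z ω ∈ 𝒵} = ν (Ici t) from hν _ measurableSet_Ici, hνuniv]
    exact div_le_iff₀ hc
  have hS : MeasurableSet {t | ν.real (Ici t) ≤ α * ν.real univ} :=
    measurableSet_le antitone_measureReal_Ici.measurable measurable_const
  calc P {ω | p (Z ω) ≤ α ∧ Z ω ∈ 𝒵} = ν {t | ν.real (Ici t) ≤ α * ν.real univ} := by
        simp only [hpν]; exact hν _ hS
    _ = ENNReal.ofReal (α * ν.real univ) := by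
        rw [← ofReal_measureReal, measureReal_setOf_measureReal_Ici_le (mul_pos hα0 hc)
          (mul_lt_of_lt_one_left hc hα1)]
    _ = ENNReal.ofReal α * P {ω | Z ω ∈ 𝒵} := by
        rw [ENNReal.ofReal_mul hα0.le, ofReal_measureReal, hνuniv]

/-- Selective p-value validity for a Gaussian test statistic truncated to a selection
event `𝒵`: if `Z ~ N(m, v)` with `v > 0` and `P(Z ∈ 𝒵) > 0`, then the selective
p-value `p(t) = P(Z ≥ t ∧ Z ∈ 𝒵)/P(Z ∈ 𝒵)` satisfies
`P(p(Z) ≤ α ∧ Z ∈ 𝒵) = α · P(Z ∈ 𝒵)` for all `α ∈ (0,1)`. -/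
theorem stmt_1 {Ω : Type*} [MeasurableSpace Ω] (P : Measure Ω) [IsProbabilityMeasure P]
    (Z : Ω → ℝ) (hZ : Measurable Z) (m : ℝ) (v : ℝ≥0) (hv : 0 < v)
    (hlaw : P.map Z = gaussianReal m v)
    (𝒵 : Set ℝ) (h𝒵 : MeasurableSet 𝒵) (hpos : 0 < P {ω | Z ω ∈ 𝒵})
    (p : ℝ → ℝ)
    (hp : ∀ t : ℝ, p t = (P {ω | t ≤ Z ω ∧ Z ω ∈ 𝒵}).toReal / (P {ω | Z ω ∈ 𝒵}).toReal)
    (α : ℝ) (hα : α ∈ Set.Ioo (0 : ℝ) 1) :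
    P {ω | p (Z ω) ≤ α ∧ Z ω ∈ 𝒵} = ENNReal.ofReal α * P {ω | Z ω ∈ 𝒵} :=
  stmt_1_general P Z hZ m v hv hlaw 𝒵 h𝒵 hpos p hp α hα
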